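/- Let L be an n×n symmetric positive definite matrix. Then for any C ⊆ D ⊆ Fin n and i ∉ D: log det(L_{C∪{i}}) − log det(L_C) ≥ log det(L_{D∪{i}}) − log det(L_D). -/

import Mathlib

open Matrix Finset

lemma posDef_submatrix_inj {m n : Type*} [Fintype m] [Fintype n] [DecidableEq n]
    {M : Matrix n n ℝ} (hM : M.PosDef) {e : m → n} (he : Function.Injective e) :
    (M.submatrix e e).PosDef := by
  rw [Matrix.posDef_iff_dotProduct_mulVec]
  constructor
  · ext a b
    simpa [Matrix.conjTranspose_apply, Matrix.submatrix_apply] using (hM.1.apply (e b) (e a)).symm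
  · intro x hx
    set y : n → ℝ := Function.extend e x 0 with hy
    have hye : ∀ a, y (e a) = x a := fun a => he.extend_apply x 0 a
    have hy0 : y ≠ 0 := by
      intro h
      apply hx
      funext a
      have := congrFun h (e a)
      rw [hye a] at this
      exact this
    have hsum : ∀ f : n → ℝ, (∑ j, f j * y j) = ∑ a, f (e a) * x a := by
      intro f
      have h1 : ∑ j ∈ Finset.univ.image e, f j * y j = ∑ j, f j * y j := by
        apply Finset.sum_subset (Finset.subset_univ _)
        intro j _ hj
        have hz : y j = (0 : n → ℝ) j :=
          Function.extend_apply' x (0 : n → ℝ) j (by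
            rintro ⟨a, rfl⟩
            exact hj (Finset.mem_image_of_mem e (Finset.mem_univ a)))
        simp only [Pi.zero_apply] at hz
        rw [hz, mul_zero]
      rw [← h1, Finset.sum_image (fun a _ b _ h => he h)]
      simp [hye]
    have key : dotProduct (star y) (M *ᵥ y) = dotProduct (star x) (M.submatrix e e *ᵥ x) := by
      simp only [dotProduct, mulVec, star_trivial, Pi.star_apply, submatrix_apply, id_eq]
      calc ∑ j, y j * ∑ k, M j k * y k
          = ∑ j, (fun j => ∑ b, M j (e b) * x b) j * y j := by
            refine Finset.sum_congr rfl fun j _ => ?_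
            rw [hsum (fun k => M j k), mul_comm]
        _ = ∑ a, (∑ b, M (e a) (e b) * x b) * x a := hsum _
        _ = ∑ a, x a * ∑ b, M (e a) (e b) * x b := by
            exact Finset.sum_congr rfl fun a _ => mul_comm _ _
    rw [← key]
    exact hM.dotProduct_mulVec_pos hy0

/-- Principal minor of `L` indexed by `C`, with value `1` when `C = ∅`. -/
def pminor {n : ℕ} (L : Matrix (Fin n) (Fin n) ℝ) (C : Finset (Fin n)) : ℝ :=
  (L.submatrix (fun i : C => (i : Fin n)) (fun j : C => (j : Fin n))).det

lemma pminor_eq_det {n : ℕ} (L : Matrix (Fin n) (Fin n) ℝ) {ι : Type} [Fintype ι]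
    [DecidableEq ι] {f : ι → Fin n} (hf : Function.Injective f) {A : Finset (Fin n)}
    (hA : Finset.image f Finset.univ = A) :
    pminor L A = (L.submatrix f f).det := by
  have hmem : ∀ a : ι, f a ∈ A := by
    intro a; rw [← hA]; exact Finset.mem_image_of_mem f (Finset.mem_univ a)
  let e : ι ≃ {x // x ∈ A} := Equiv.ofBijective (fun a => ⟨f a, hmem a⟩)
    ⟨fun a b h => hf (congrArg Subtype.val h), by
      rintro ⟨v, hv⟩
      rw [← hA] at hv
      obtain ⟨a, _, rfl⟩ := Finset.mem_image.mp hv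
      exact ⟨a, rfl⟩⟩
  have : (L.submatrix (fun i : A => (i : Fin n)) (fun j : A => (j : Fin n))).submatrix e e
      = L.submatrix f f := by
    ext a b; rfl
  rw [pminor, ← Matrix.det_submatrix_equiv_self e, this]

lemma pminor_pos {n : ℕ} {L : Matrix (Fin n) (Fin n) ℝ} (hL : L.PosDef)
    (A : Finset (Fin n)) : 0 < pminor L A :=
  (posDef_submatrix_inj hL (fun a b h => Subtype.ext h :
    Function.Injective fun i : A => (i : Fin n))).det_pos

lemma pminor_union {n : ℕ} {L : Matrix (Fin n) (Fin n) ℝ} (hL : L.PosDef)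
    (S : Finset (Fin n)) {ι : Type} [Fintype ι] [DecidableEq ι] {g : ι → Fin n}
    (hg : Function.Injective g) (hdis : ∀ a, g a ∉ S) :
    pminor L (S ∪ Finset.image g Finset.univ)
      = pminor L S *
        (L.submatrix g g
          - L.submatrix g (fun j : S => (j : Fin n))
            * (L.submatrix (fun i : S => (i : Fin n)) (fun j : S => (j : Fin n)))⁻¹
            * L.submatrix (fun i : S => (i : Fin n)) g).det := by
  set c : {x // x ∈ S} → Fin n := fun i => (i : Fin n) with hc
  have hcinj : Function.Injective c := fun a b h => Subtype.ext h
  set f : {x // x ∈ S} ⊕ ι → Fin n := Sum.elim c g with hfdef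
  have hfinj : Function.Injective f := by
    rintro (a | a) (b | b) h
    · exact congrArg Sum.inl (hcinj h)
    · exact absurd ((show c a = g b from h) ▸ a.2) (hdis b)
    · exact absurd ((show c b = g a from h.symm) ▸ b.2) (hdis a)
    · exact congrArg Sum.inr (hg h)
  have himg : Finset.image f Finset.univ = S ∪ Finset.image g Finset.univ := by
    ext v
    simp only [Finset.mem_image, Finset.mem_union, Finset.mem_univ, true_and]
    constructor
    · rintro ⟨(a | a), rfl⟩
      · exact Or.inl a.2
      · exact Or.inr ⟨a, rfl⟩
    · rintro (hv | ⟨a, rfl⟩)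
      · exact ⟨Sum.inl ⟨v, hv⟩, rfl⟩
      · exact ⟨Sum.inr a, rfl⟩
  have hblock : L.submatrix f f
      = Matrix.fromBlocks (L.submatrix c c) (L.submatrix c g)
          (L.submatrix g c) (L.submatrix g g) := by
    ext (a | a) (b | b) <;> rfl
  have hApd : (L.submatrix c c).PosDef := posDef_submatrix_inj hL hcinj
  have : Invertible (L.submatrix c c) :=
    (L.submatrix c c).invertibleOfIsUnitDet (isUnit_iff_ne_zero.mpr hApd.det_pos.ne')
  rw [pminor_eq_det L hfinj himg, hblock, Matrix.det_fromBlocks₁₁,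
    Matrix.invOf_eq_nonsing_inv]
  rfl

/-- 1×1 Schur complement value of `L_S` in `L_{S ∪ {i}}`. -/
noncomputable def schurv {n : ℕ} (L : Matrix (Fin n) (Fin n) ℝ) (S : Finset (Fin n))
    (i : Fin n) : ℝ :=
  L i i -
    (L.submatrix (fun _ : Unit => i) (fun j : S => (j : Fin n))
      * (L.submatrix (fun i : S => (i : Fin n)) (fun j : S => (j : Fin n)))⁻¹
      * L.submatrix (fun i : S => (i : Fin n)) (fun _ : Unit => i)) () ()

lemma pminor_insert {n : ℕ} {L : Matrix (Fin n) (Fin n) ℝ} (hL : L.PosDef)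
    {S : Finset (Fin n)} {i : Fin n} (hi : i ∉ S) :
    pminor L (insert i S) = pminor L S * schurv L S i := by
  have h := pminor_union hL S (g := fun _ : Unit => i)
    (fun a b _ => Subsingleton.elim a b) (fun _ => hi)
  have himg : Finset.image (fun _ : Unit => i) Finset.univ = {i} := by
    ext v; simp
  rw [himg] at h
  have hins : S ∪ {i} = insert i S := by
    ext v; simp [or_comm]
  rw [hins] at h
  rw [h, Matrix.det_unique]
  rfl

lemma schurv_pos {n : ℕ} {L : Matrix (Fin n) (Fin n) ℝ} (hL : L.PosDef)
    {S : Finset (Fin n)} {i : Fin n} (hi : i ∉ S) : 0 < schurv L S i := by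
  have h := pminor_insert hL hi
  have h1 := pminor_pos hL S
  have h2 := pminor_pos hL (insert i S)
  nlinarith

lemma schurv_insert_le {n : ℕ} {L : Matrix (Fin n) (Fin n) ℝ} (hL : L.PosDef)
    {S : Finset (Fin n)} {i j : Fin n} (hi : i ∉ S) (hj : j ∉ S) (hij : i ≠ j) :
    schurv L (insert j S) i ≤ schurv L S i := by
  set c : {x // x ∈ S} → Fin n := fun i => (i : Fin n) with hc
  set g : Fin 2 → Fin n := ![i, j] with hgdef
  have hginj : Function.Injective g := by
    intro a b h
    rw [hgdef] at h
    fin_cases a <;> fin_cases b <;>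
      simp_all [Matrix.cons_val_zero, Matrix.cons_val_one, Matrix.head_cons]
  have hgdis : ∀ a, g a ∉ S := by
    intro a; fin_cases a <;> simpa [hgdef]
  have h2 := pminor_union hL S hginj hgdis
  have himg : Finset.image g Finset.univ = {i, j} := by
    ext v
    simp only [Finset.mem_image, Finset.mem_univ, true_and, Finset.mem_insert,
      Finset.mem_singleton, hgdef, Fin.exists_fin_two, Matrix.cons_val_zero,
      Matrix.cons_val_one, Matrix.head_cons]
    constructor
    · rintro (rfl | rfl) <;> simp
    · rintro (rfl | rfl) <;> simp
  have hins : S ∪ {i, j} = insert i (insert j S) := by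
    ext v
    simp only [Finset.mem_union, Finset.mem_insert, Finset.mem_singleton]
    tauto
  rw [himg, hins] at h2
  set M := L.submatrix g g - L.submatrix g c * (L.submatrix c c)⁻¹ * L.submatrix c g with hM
  have hT : Lᵀ = L := by
    ext a b; simpa using hL.1.apply a b
  have hMsym : Mᵀ = M := by
    rw [hM]
    simp only [Matrix.transpose_sub, Matrix.transpose_mul, Matrix.transpose_submatrix,
      Matrix.transpose_nonsing_inv, hT, Matrix.mul_assoc]
  have hb : M 0 1 = M 1 0 := congrFun (congrFun hMsym 1) 0
  have hdet : M.det = M 0 0 * M 1 1 - M 0 1 * M 1 0 := Matrix.det_fin_two M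
  have hM00 : M 0 0 = schurv L S i := by
    simp only [hM, Matrix.sub_apply, Matrix.mul_apply, Matrix.submatrix_apply]
    simp [schurv, Matrix.mul_apply, hgdef, hc]
  have hM11 : M 1 1 = schurv L S j := by
    simp only [hM, Matrix.sub_apply, Matrix.mul_apply, Matrix.submatrix_apply]
    simp [schurv, Matrix.mul_apply, hgdef, hc]
  -- the other determinant expansion
  have hj' : i ∉ insert j S := by simp [hij, hi]
  have h3 : pminor L (insert i (insert j S))
      = pminor L S * schurv L S j * schurv L (insert j S) i := by
    rw [pminor_insert hL hj', pminor_insert hL hj]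
  have hpS := pminor_pos hL S
  have hdj := schurv_pos hL hj
  have key : schurv L S j * schurv L (insert j S) i
      = schurv L S i * schurv L S j - M 0 1 * M 0 1 := by
    have := h3.symm.trans h2
    rw [hdet, hM00, hM11, hb] at this
    have := mul_left_cancel₀ hpS.ne' (by linarith [this] : pminor L S * (schurv L S j * schurv L (insert j S) i) = pminor L S * (schurv L S i * schurv L S j - M 1 0 * M 1 0))
    rw [hb]
    exact this
  nlinarith [sq_nonneg (M 0 1), schurv_pos hL hj', mul_pos hdj (schurv_pos hL hj')]

lemma schurv_mono_aux {n : ℕ} {L : Matrix (Fin n) (Fin n) ℝ} (hL : L.PosDef) (i : Fin n) :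
    ∀ (k : ℕ) (C D : Finset (Fin n)), C ⊆ D → i ∉ D → (D \ C).card = k →
      schurv L D i ≤ schurv L C i := by
  intro k
  induction k with
  | zero =>
    intro C D hCD hiD hcard
    have : D \ C = ∅ := Finset.card_eq_zero.mp hcard
    have hDC : D ⊆ C := by
      intro x hx
      by_contra hxC
      exact absurd (Finset.mem_sdiff.mpr ⟨hx, hxC⟩) (by simp [this])
    rw [Finset.Subset.antisymm hDC hCD]
  | succ k ih =>
    intro C D hCD hiD hcard
    have hne : D \ C ≠ ∅ := by
      intro h; rw [h] at hcard; simp at hcard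
    obtain ⟨j, hj⟩ := Finset.nonempty_iff_ne_empty.mpr hne
    obtain ⟨hjD, hjC⟩ := Finset.mem_sdiff.mp hj
    have hC'D : insert j C ⊆ D := Finset.insert_subset hjD hCD
    have hcard' : (D \ insert j C).card = k := by
      rw [Finset.sdiff_insert]
      rw [Finset.card_erase_of_mem hj, hcard]
      rfl
    have hiC : i ∉ C := fun h => hiD (hCD h)
    have hij : i ≠ j := fun h => hiD (h ▸ hjD)
    calc schurv L D i ≤ schurv L (insert j C) i := ih (insert j C) D hC'D hiD hcard'
      _ ≤ schurv L C i := schurv_insert_le hL hiC hjC hij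

lemma log_marginal {n : ℕ} {L : Matrix (Fin n) (Fin n) ℝ} (hL : L.PosDef)
    {S : Finset (Fin n)} {i : Fin n} (hi : i ∉ S) :
    Real.log (pminor L (insert i S)) - Real.log (pminor L S)
      = Real.log (schurv L S i) := by
  rw [pminor_insert hL hi, Real.log_mul (pminor_pos hL S).ne' (schurv_pos hL hi).ne']
  ring

/-- Diminishing marginal gains of `log det` of principal minors: for
`C ⊆ D` and `i ∉ D`, the marginal gain at `C` dominates that at `D`. -/
theorem logdet_pminor_diminishing_gains {n : ℕ} (L : Matrix (Fin n) (Fin n) ℝ)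
    (hL : L.PosDef) (C D : Finset (Fin n)) (hCD : C ⊆ D) (i : Fin n) (hi : i ∉ D) :
    Real.log (pminor L (insert i D)) - Real.log (pminor L D)
      ≤ Real.log (pminor L (insert i C)) - Real.log (pminor L C) := by
  have hiC : i ∉ C := fun h => hi (hCD h)
  rw [log_marginal hL hi, log_marginal hL hiC]
  exact Real.log_le_log (schurv_pos hL hi)
    (schurv_mono_aux hL i (D \ C).card C D hCD hi rfl)
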